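/- arXiv:2603.27709 — 3 statements merged into one kernel-verified Lean document; each statement's English description precedes it below -/
import Mathlib

section
/- Let 𝒢 be a torsion class in mod-Λ. If f : B ↠ C and g : C ↠ D are fibrations (surjections between objects of 𝒢 whose kernels are strict subobjects of the source), then the composition g∘f : B ↠ D is a fibration. -/
/-!
Common framework: a torsion class `𝒢` in `mod-Λ` is modelled as a predicate
`G : ModuleCat R → Prop` (closed under isomorphism, quotients and extensions).
Strict subobjects, fibrations, cofibrations, strict morphisms, pseudo-torsion
classes etc. follow the definitions of the paper.
-/

namespace PaperTC

variable {R : Type} [Ring R]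

/-- Membership of a (type-level) module in a class of modules. -/
def Mem (G : ModuleCat.{0} R → Prop) (M : Type) [AddCommGroup M] [Module R M] : Prop :=
  G (ModuleCat.of R M)

/-- `A` is a strict subobject of `M` (w.r.t. the torsion class `G`):
`A` lies in `G` and `A ⊓ B'` lies in `G` for every subobject `B'` of `M`. -/
def IsStrictSub (G : ModuleCat.{0} R → Prop) {M : Type} [AddCommGroup M] [Module R M]
    (A : Submodule R M) : Prop :=
  Mem G ↥A ∧ ∀ B' : Submodule R M, Mem G ↥B' → Mem G ↥(A ⊓ B')

/-- A fibration is a surjection whose kernel is a strict subobject of the source. -/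
def IsFibration (G : ModuleCat.{0} R → Prop) {M N : Type} [AddCommGroup M] [Module R M]
    [AddCommGroup N] [Module R N] (f : M →ₗ[R] N) : Prop :=
  Function.Surjective f ∧ IsStrictSub G (LinearMap.ker f)

/-- A strict morphism: kernel is a strict subobject of the source and image a
strict subobject of the target. -/
def IsStrictMorphism (G : ModuleCat.{0} R → Prop) {M N : Type} [AddCommGroup M] [Module R M]
    [AddCommGroup N] [Module R N] (f : M →ₗ[R] N) : Prop :=
  IsStrictSub G (LinearMap.ker f) ∧ IsStrictSub G (LinearMap.range f)

/-- `G` is a torsion class in `mod-Λ`. -/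
structure IsTorsionClass (G : ModuleCat.{0} R → Prop) : Prop where
  iso_closed : ∀ (M N : Type) [AddCommGroup M] [Module R M] [AddCommGroup N] [Module R N],
      (M ≃ₗ[R] N) → Mem G M → Mem G N
  zero_mem : ∀ (M : Type) [AddCommGroup M] [Module R M], Subsingleton M → Mem G M
  quot_closed : ∀ (M : Type) [AddCommGroup M] [Module R M] (N : Submodule R M),
      Mem G M → Mem G (M ⧸ N)
  ext_closed : ∀ (A B C : Type) [AddCommGroup A] [Module R A] [AddCommGroup B] [Module R B]
      [AddCommGroup C] [Module R C] (f : A →ₗ[R] B) (g : B →ₗ[R] C),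
      Function.Injective f → Function.Surjective g →
      LinearMap.range f = LinearMap.ker g → Mem G A → Mem G C → Mem G B

/-- A pseudo-torsion class `P` in the torsion class `G`: nonempty (contains zero
objects), closed under strict quotients and under strict extensions. -/
structure IsPseudoTorsionClass (G P : ModuleCat.{0} R → Prop) : Prop where
  subset : ∀ M : ModuleCat.{0} R, P M → G M
  zero_mem : ∀ (M : Type) [AddCommGroup M] [Module R M], Subsingleton M → Mem G M → Mem P M
  quot_closed : ∀ (M : Type) [AddCommGroup M] [Module R M] (A : Submodule R M),
      IsStrictSub G A → Mem P M → Mem P (M ⧸ A)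
  ext_closed : ∀ (A B C : Type) [AddCommGroup A] [Module R A] [AddCommGroup B] [Module R B]
      [AddCommGroup C] [Module R C] (f : A →ₗ[R] B) (g : B →ₗ[R] C),
      Function.Injective f → Function.Surjective g →
      LinearMap.range f = LinearMap.ker g → IsStrictSub G (LinearMap.range f) →
      Mem P A → Mem P C → Mem P B

/-- A pseudo-torsionfree class `Q` in the torsion class `G`. -/
structure IsPseudoTorsionFreeClass (G Q : ModuleCat.{0} R → Prop) : Prop where
  subset : ∀ M : ModuleCat.{0} R, Q M → G M
  zero_mem : ∀ (M : Type) [AddCommGroup M] [Module R M], Subsingleton M → Mem G M → Mem Q M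
  sub_closed : ∀ (M : Type) [AddCommGroup M] [Module R M] (A : Submodule R M),
      IsStrictSub G A → Mem Q M → Mem Q ↥A
  ext_closed : ∀ (A B C : Type) [AddCommGroup A] [Module R A] [AddCommGroup B] [Module R B]
      [AddCommGroup C] [Module R C] (f : A →ₗ[R] B) (g : B →ₗ[R] C),
      Function.Injective f → Function.Surjective g →
      LinearMap.range f = LinearMap.ker g → IsStrictSub G (LinearMap.range f) →
      Mem Q A → Mem Q C → Mem Q B

/-- `Y` lies in the right perpendicular class `X ⟂`: no nonzero strict morphism
from an object of `X` to `Y`. -/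
def MemRightPerp (G X : ModuleCat.{0} R → Prop) (Y : Type) [AddCommGroup Y] [Module R Y] : Prop :=
  Mem G Y ∧ ∀ M : ModuleCat.{0} R, X M → ∀ f : M →ₗ[R] Y, IsStrictMorphism G f → f = 0

/-- `M` lies in the left perpendicular class `⟂ Y`. -/
def MemLeftPerp (G Y : ModuleCat.{0} R → Prop) (M : Type) [AddCommGroup M] [Module R M] : Prop :=
  Mem G M ∧ ∀ N : ModuleCat.{0} R, Y N → ∀ f : M →ₗ[R] N, IsStrictMorphism G f → f = 0

/-- A pseudo-wide subcategory `W` of `G`. -/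
structure IsPseudoWide (G W : ModuleCat.{0} R → Prop) : Prop where
  subset : ∀ M : ModuleCat.{0} R, W M → G M
  zero_mem : ∀ (M : Type) [AddCommGroup M] [Module R M], Subsingleton M → Mem G M → Mem W M
  kic : ∀ (A B : Type) [AddCommGroup A] [Module R A] [AddCommGroup B] [Module R B],
      Mem W A → Mem W B → ∀ f : A →ₗ[R] B, IsStrictMorphism G f →
      Mem W ↥(LinearMap.ker f) ∧ Mem W ↥(LinearMap.range f) ∧
        Mem W (B ⧸ LinearMap.range f)
  ext_closed : ∀ (A B C : Type) [AddCommGroup A] [Module R A] [AddCommGroup B] [Module R B]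
      [AddCommGroup C] [Module R C] (f : A →ₗ[R] B) (g : B →ₗ[R] C),
      Function.Injective f → Function.Surjective g →
      LinearMap.range f = LinearMap.ker g → IsStrictSub G (LinearMap.range f) →
      Mem W A → Mem W C → Mem W B

/-- A stability condition: a real-valued function on modules, invariant under
isomorphism and additive on short exact sequences of finitely generated modules
(this is exactly a functional on `K₀Λ` applied to dimension vectors). -/
structure StabilityCondition (R : Type) [Ring R] : Type 1 where
  val : ModuleCat.{0} R → ℝ
  iso_inv : ∀ (M N : ModuleCat.{0} R), (↥M ≃ₗ[R] ↥N) → val M = val N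
  additive : ∀ (M : ModuleCat.{0} R), Module.Finite R ↥M → ∀ A : Submodule R ↥M,
      val (ModuleCat.of R ↥A) + val (ModuleCat.of R (↥M ⧸ A)) = val M

/-- The value `θ(M)` of a stability condition on a module. -/
def StabilityCondition.app (θ : StabilityCondition R) (M : Type) [AddCommGroup M]
    [Module R M] : ℝ :=
  θ.val (ModuleCat.of R M)

/-- `𝒫(θ)`: objects which are zero, or on which `θ` is positive together with
all nonzero strict quotients. -/
def memP (G : ModuleCat.{0} R → Prop) (θ : StabilityCondition R)
    (M : Type) [AddCommGroup M] [Module R M] : Prop :=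
  Mem G M ∧ (Subsingleton M ∨ (0 < θ.app M ∧
    ∀ A : Submodule R M, IsStrictSub G A → A ≠ ⊤ → 0 < θ.app (M ⧸ A)))

/-- `𝒫̄(θ)`: `θ` is nonnegative on the object and all its strict quotients. -/
def memPbar (G : ModuleCat.{0} R → Prop) (θ : StabilityCondition R)
    (M : Type) [AddCommGroup M] [Module R M] : Prop :=
  Mem G M ∧ 0 ≤ θ.app M ∧ ∀ A : Submodule R M, IsStrictSub G A → 0 ≤ θ.app (M ⧸ A)

/-- `𝒬(θ)`: objects which are zero, or on which `θ` is negative together with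
all nonzero strict subobjects. -/
def memQ (G : ModuleCat.{0} R → Prop) (θ : StabilityCondition R)
    (M : Type) [AddCommGroup M] [Module R M] : Prop :=
  Mem G M ∧ (Subsingleton M ∨ (θ.app M < 0 ∧
    ∀ A : Submodule R M, IsStrictSub G A → A ≠ ⊥ → θ.app ↥A < 0))

/-- `𝒬̄(θ)`: `θ` is nonpositive on the object and all its strict subobjects. -/
def memQbar (G : ModuleCat.{0} R → Prop) (θ : StabilityCondition R)
    (M : Type) [AddCommGroup M] [Module R M] : Prop :=
  Mem G M ∧ θ.app M ≤ 0 ∧ ∀ A : Submodule R M, IsStrictSub G A → θ.app ↥A ≤ 0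

/-- `𝒲(θ)`: θ-semistable objects of `G`; equivalently `θ ∈ D_𝒢(M)`. -/
def memW (G : ModuleCat.{0} R → Prop) (θ : StabilityCondition R)
    (M : Type) [AddCommGroup M] [Module R M] : Prop :=
  Mem G M ∧ θ.app M = 0 ∧ ∀ A : Submodule R M, IsStrictSub G A → θ.app ↥A ≤ 0

/-- `𝒲₀(θ)`: objects of `𝒲(θ)` with no proper nonzero strict subobject in `𝒲(θ)`. -/
def memW0 (G : ModuleCat.{0} R → Prop) (θ : StabilityCondition R)
    (M : Type) [AddCommGroup M] [Module R M] : Prop :=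
  memW G θ M ∧ ∀ A : Submodule R M, IsStrictSub G A → memW G θ ↥A → A = ⊥ ∨ A = ⊤

/-- The linear path `θ_t = t·θ₁ + (1-t)·θ₀` in the stability space. -/
def lineSeg (θ₀ θ₁ : StabilityCondition R) (t : ℝ) : StabilityCondition R where
  val M := t * θ₁.val M + (1 - t) * θ₀.val M
  iso_inv M N e := by rw [θ₁.iso_inv M N e, θ₀.iso_inv M N e]
  additive M hM A := by
    have h1 := θ₁.additive M hM A
    have h0 := θ₀.additive M hM A
    linear_combination t * h1 + (1 - t) * h0

/-- A smooth green path in the stability space. -/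
structure IsGreenPath (G : ModuleCat.{0} R → Prop) (θ : ℝ → StabilityCondition R) : Prop where
  smooth : ∀ M : ModuleCat.{0} R, ContDiff ℝ (⊤ : ℕ∞) fun t => (θ t).val M
  green : ∀ (t : ℝ) (M : ModuleCat.{0} R), ¬Subsingleton ↥M → memW G (θ t) ↥M →
      0 < deriv (fun s => (θ s).val M) t
  eventually_pos : ∃ T : ℝ, ∀ t : ℝ, T < t → ∀ M : ModuleCat.{0} R, G M →
      ¬Subsingleton ↥M → 0 < (θ t).val M
  eventually_neg : ∃ T : ℝ, ∀ t : ℝ, t < T → ∀ M : ModuleCat.{0} R, G M →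
      ¬Subsingleton ↥M → (θ t).val M < 0

/-- A filtration `M = c 0 ⊃ c 1 ⊃ ⋯ ⊃ c m = 0` by strict subobjects whose
subquotients `c k / c (k+1)` lie in the slices `W (t k)` with `t` strictly
decreasing. -/
def IsSliceFiltration (G : ModuleCat.{0} R → Prop) {S : Type} [Preorder S]
    (W : S → ModuleCat.{0} R → Prop) {M : Type} [AddCommGroup M] [Module R M]
    (m : ℕ) (t : Fin m → S) (c : Fin (m + 1) → Submodule R M) : Prop :=
  c 0 = ⊤ ∧ c (Fin.last m) = ⊥ ∧ StrictAnti c ∧ StrictAnti t ∧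
  (∀ i, IsStrictSub G (c i)) ∧
  ∀ k : Fin m, W (t k) (ModuleCat.of R
    (↥(c k.castSucc) ⧸ Submodule.comap (c k.castSucc).subtype (c k.succ)))

/-- A strict HN-stratification of `G`: slices are pseudo-wide subcategories
indexed by a totally ordered set, with no nonzero strict morphisms backwards,
such that every object of `G` has a strict filtration with subquotients in
decreasing slices. -/
structure IsHNStratification (G : ModuleCat.{0} R → Prop) {S : Type} [LinearOrder S]
    (W : S → ModuleCat.{0} R → Prop) : Prop where
  wide : ∀ s : S, IsPseudoWide G (W s)
  no_backward : ∀ s₀ s₁ : S, s₀ < s₁ → ∀ X Y : ModuleCat.{0} R, W s₀ X → W s₁ Y →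
      ∀ f : X →ₗ[R] Y, IsStrictMorphism G f → f = 0
  filt : ∀ M : ModuleCat.{0} R, G M → ∃ (m : ℕ) (t : Fin m → S)
      (c : Fin (m + 1) → Submodule R ↥M), IsSliceFiltration G W m t c

theorem statement_3 (k : Type) [Field k] [Algebra k R] [FiniteDimensional k R]
    (G : ModuleCat.{0} R → Prop) (hG : IsTorsionClass G)
    (hfin : ∀ M : ModuleCat.{0} R, G M → Module.Finite R ↥M)
    (B C D : Type) [AddCommGroup B] [Module R B] [AddCommGroup C] [Module R C]
    [AddCommGroup D] [Module R D]
    (hB : Mem G B) (hC : Mem G C) (hD : Mem G D)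
    (f : B →ₗ[R] C) (g : C →ₗ[R] D)
    (hf : IsFibration G f) (hg : IsFibration G g) :
    IsFibration G (g ∘ₗ f) := by
  obtain ⟨fsurj, hKf, hKfint⟩ := hf
  obtain ⟨gsurj, hKg, hKgint⟩ := hg
  have hle : LinearMap.ker f ≤ LinearMap.ker (g ∘ₗ f) := by
    intro x hx
    simp only [LinearMap.mem_ker, LinearMap.comp_apply] at *
    rw [hx, map_zero]
  have key : ∀ X : Submodule R B, Mem G ↥X → Mem G ↥(LinearMap.ker (g ∘ₗ f) ⊓ X) := by
    intro X hX
    set K' := LinearMap.ker (g ∘ₗ f) with hK'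
    -- `f(X)` lies in `G` as a quotient of `X`
    have hmap : Mem G ↥(Submodule.map f X) := by
      have h1 : Mem G (↥X ⧸ LinearMap.ker (f ∘ₗ X.subtype)) :=
        hG.quot_closed ↥X _ hX
      have e : (↥X ⧸ LinearMap.ker (f ∘ₗ X.subtype)) ≃ₗ[R] ↥(Submodule.map f X) :=
        (LinearMap.quotKerEquivRange (f ∘ₗ X.subtype)).trans
          (LinearEquiv.ofEq _ _ (by rw [LinearMap.range_comp, Submodule.range_subtype]))
      exact hG.iso_closed _ _ e h1
    have hL : Mem G ↥(LinearMap.ker g ⊓ Submodule.map f X) := hKgint _ hmap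
    have hA : Mem G ↥(LinearMap.ker f ⊓ X) := hKfint X hX
    have hle2 : LinearMap.ker f ⊓ X ≤ K' ⊓ X := inf_le_inf_right X hle
    -- inclusion
    set ι : ↥(LinearMap.ker f ⊓ X) →ₗ[R] ↥(K' ⊓ X) := Submodule.inclusion hle2 with hι
    -- projection onto `ker g ⊓ f(X)`
    have hmem : ∀ x : ↥(K' ⊓ X), f x.1 ∈ LinearMap.ker g ⊓ Submodule.map f X := by
      intro x
      refine ⟨?_, ⟨x.1, x.2.2, rfl⟩⟩
      have := x.2.1
      simpa [hK', LinearMap.mem_ker, LinearMap.comp_apply] using this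
    set φ : ↥(K' ⊓ X) →ₗ[R] ↥(LinearMap.ker g ⊓ Submodule.map f X) :=
      LinearMap.codRestrict _ (f.domRestrict (K' ⊓ X)) hmem with hφ
    have hinj : Function.Injective ι := Submodule.inclusion_injective hle2
    have hsurj : Function.Surjective φ := by
      rintro ⟨y, hy1, hy2⟩
      obtain ⟨x, hxX, hfx⟩ := hy2
      have hxK' : x ∈ K' := by
        simp only [hK', LinearMap.mem_ker, LinearMap.comp_apply, hfx]
        exact hy1
      refine ⟨⟨x, hxK', hxX⟩, ?_⟩
      apply Subtype.ext
      exact hfx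
    have hexact : LinearMap.range ι = LinearMap.ker φ := by
      ext x
      constructor
      · rintro ⟨a, rfl⟩
        apply Subtype.ext
        exact a.2.1
      · intro hx
        have hfx : f x.1 = 0 := by
          have := congrArg Subtype.val hx
          exact this
        exact ⟨⟨x.1, hfx, x.2.2⟩, Subtype.ext rfl⟩
    exact hG.ext_closed _ _ _ ι φ hinj hsurj hexact hA hL
  constructor
  · exact gsurj.comp fsurj
  · constructor
    · have htop : Mem G ↥(⊤ : Submodule R B) :=
        hG.iso_closed _ _ (Submodule.topEquiv (R := R) (M := B)).symm hB
      have := key ⊤ htop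
      rwa [inf_top_eq] at this
    · exact key

end PaperTC
end

section
/- Let (𝒫, 𝒬) be a pseudo-torsion pair in a torsion class 𝒢 (so 𝒬 = 𝒫⟂ with respect to strict morphisms). Then every M ∈ 𝒢 admits a unique strict short exact sequence tM ↣ M ↠ fM with tM ∈ 𝒫 and fM ∈ 𝒬. Moreover any strict morphism M → N induces unique strict morphisms tM → tN and fM → fN making the evident diagram commute. -/
/-!
Common framework: a torsion class `𝒢` in `mod-Λ` is modelled as a predicate
`G : ModuleCat R → Prop` (closed under isomorphism, quotients and extensions).
Strict subobjects, fibrations, cofibrations, strict morphisms, pseudo-torsion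
classes etc. follow the definitions of the paper.
-/

namespace PaperTC

variable {R : Type} [Ring R]

section Toolkit
variable {G : ModuleCat.{0} R → Prop} (hG : IsTorsionClass G)
include hG

lemma memIso {A B : Type} [AddCommGroup A] [Module R A] [AddCommGroup B] [Module R B]
    (e : A ≃ₗ[R] B) (h : Mem G A) : Mem G B := hG.iso_closed A B e h

lemma memExt {X Y : Type} [AddCommGroup X] [Module R X] [AddCommGroup Y] [Module R Y]
    (h : X →ₗ[R] Y) (hk : Mem G ↥(LinearMap.ker h)) (hr : Mem G ↥(LinearMap.range h)) :
    Mem G X :=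
  hG.ext_closed _ _ _ (LinearMap.ker h).subtype h.rangeRestrict
    (Submodule.injective_subtype _) h.surjective_rangeRestrict
    (by rw [Submodule.range_subtype, LinearMap.ker_rangeRestrict]) hk hr

lemma memImage {X Y : Type} [AddCommGroup X] [Module R X] [AddCommGroup Y] [Module R Y]
    (h : X →ₗ[R] Y) (hX : Mem G X) : Mem G ↥(LinearMap.range h) :=
  memIso hG h.quotKerEquivRange (hG.quot_closed X _ hX)

lemma memMap {M N : Type} [AddCommGroup M] [Module R M] [AddCommGroup N] [Module R N]
    (f : M →ₗ[R] N) {S : Submodule R M} (hS : Mem G ↥S) : Mem G ↥(Submodule.map f S) := by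
  have : Submodule.map f S = LinearMap.range (f ∘ₗ S.subtype) := by
    rw [LinearMap.range_comp, Submodule.range_subtype]
  rw [this]
  exact memImage hG _ hS

lemma memComapSubtype {M : Type} [AddCommGroup M] [Module R M] {S K : Submodule R M}
    (h : Mem G ↥(K ⊓ S)) : Mem G ↥(Submodule.comap S.subtype K) := by
  have e := Submodule.equivMapOfInjective S.subtype (Submodule.injective_subtype S)
    (Submodule.comap S.subtype K)
  rw [Submodule.map_comap_subtype, inf_comm] at e
  exact memIso hG e.symm h

lemma strict_bot {M : Type} [AddCommGroup M] [Module R M] :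
    IsStrictSub G (⊥ : Submodule R M) := by
  have hsub : ∀ (B : Submodule R M), B ≤ ⊥ → Subsingleton ↥B := by
    intro B hB
    constructor
    rintro ⟨a, ha⟩ ⟨b, hb⟩
    have ha' : a = 0 := by simpa using hB ha
    have hb' : b = 0 := by simpa using hB hb
    exact Subtype.ext (ha'.trans hb'.symm)
  exact ⟨hG.zero_mem _ (hsub ⊥ le_rfl), fun B' _ => hG.zero_mem _ (hsub _ inf_le_left)⟩

lemma strict_top {M : Type} [AddCommGroup M] [Module R M] (hM : Mem G M) :
    IsStrictSub G (⊤ : Submodule R M) := by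
  constructor
  · exact memIso hG Submodule.topEquiv.symm hM
  · intro B' hB'
    exact memIso hG (LinearEquiv.ofEq _ _ (top_inf_eq B').symm) hB'

lemma memOfSub {M N : Type} [AddCommGroup M] [Module R M] [AddCommGroup N] [Module R N]
    (f : M →ₗ[R] N) (S : Submodule R M)
    (hk : Mem G ↥(LinearMap.ker f ⊓ S)) (hr : Mem G ↥(Submodule.map f S)) : Mem G ↥S := by
  apply memExt hG (f ∘ₗ S.subtype)
  · rw [LinearMap.ker_comp]
    exact memComapSubtype hG hk
  · rw [LinearMap.range_comp, Submodule.range_subtype]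
    exact hr


omit hG in
lemma map_inf_comap {M N : Type} [AddCommGroup M] [Module R M] [AddCommGroup N] [Module R N]
    (f : M →ₗ[R] N) (C : Submodule R N) (E : Submodule R M) :
    Submodule.map f (Submodule.comap f C ⊓ E) = C ⊓ Submodule.map f E := by
  apply le_antisymm
  · rintro y ⟨x, ⟨hxC, hxE⟩, rfl⟩
    exact ⟨hxC, ⟨x, hxE, rfl⟩⟩
  · rintro y ⟨hyC, x, hxE, rfl⟩
    exact ⟨x, ⟨hyC, hxE⟩, rfl⟩

lemma strictComap {M N : Type} [AddCommGroup M] [Module R M] [AddCommGroup N] [Module R N]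
    {f : M →ₗ[R] N} (hker : IsStrictSub G (LinearMap.ker f))
    (hrange : Mem G ↥(LinearMap.range f)) {C : Submodule R N} (hC : IsStrictSub G C) :
    IsStrictSub G (Submodule.comap f C) := by
  have hkle : LinearMap.ker f ≤ Submodule.comap f C := by
    intro x hx
    have hx' : f x = 0 := hx
    simp [Submodule.mem_comap, hx']
  constructor
  · apply memOfSub hG f
    · rw [inf_eq_left.mpr hkle]
      exact hker.1
    · rw [Submodule.map_comap_eq]
      exact memIso hG (LinearEquiv.ofEq _ _ (inf_comm _ _)) (hC.2 _ hrange)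
  · intro E hE
    apply memOfSub hG f
    · rw [← inf_assoc, inf_eq_left.mpr hkle]
      exact hker.2 E hE
    · rw [map_inf_comap]
      exact hC.2 _ (memMap hG f hE)

lemma strictComapSubtype {M : Type} [AddCommGroup M] [Module R M] {K S : Submodule R M}
    (hK : IsStrictSub G K) (hS : Mem G ↥S) :
    IsStrictSub G (Submodule.comap S.subtype K) := by
  apply strictComap hG (f := S.subtype)
  · rw [Submodule.ker_subtype]
    exact strict_bot hG
  · rw [Submodule.range_subtype]
    exact hS
  · exact hK

lemma strictImage {M N : Type} [AddCommGroup M] [Module R M] [AddCommGroup N] [Module R N]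
    {f : M →ₗ[R] N} (hker : Mem G ↥(LinearMap.ker f))
    (hrange : IsStrictSub G (LinearMap.range f)) {A : Submodule R M}
    (hA : IsStrictSub G A) : IsStrictSub G (Submodule.map f A) := by
  constructor
  · exact memMap hG f hA.1
  · intro C hC
    set C' := LinearMap.range f ⊓ C with hC'def
    have hC' : Mem G ↥C' := hrange.2 C hC
    set D := Submodule.comap f C' with hDdef
    have hkleD : LinearMap.ker f ≤ D := by
      intro x hx
      have hx' : f x = 0 := hx
      simp [hDdef, Submodule.mem_comap, hx', hC'def]
    have hD : Mem G ↥D := by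
      apply memOfSub hG f
      · rw [inf_eq_left.mpr hkleD]
        exact hker
      · rw [hDdef, Submodule.map_comap_eq, inf_eq_right.mpr inf_le_left]
        exact hC'
    have heq : Submodule.map f A ⊓ C = Submodule.map f (A ⊓ D) := by
      apply le_antisymm
      · rintro y ⟨⟨x, hxA, rfl⟩, hyC⟩
        exact ⟨x, ⟨hxA, ⟨⟨x, rfl⟩, hyC⟩⟩, rfl⟩
      · rintro y ⟨x, ⟨hxA, hxD⟩, rfl⟩
        exact ⟨⟨x, hxA, rfl⟩, hxD.2⟩
    rw [heq]
    exact memMap hG f (hA.2 D hD)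

end Toolkit

section Main
variable {G : ModuleCat.{0} R → Prop} (hG : IsTorsionClass G)
  {P : ModuleCat.{0} R → Prop} (hP : IsPseudoTorsionClass G P)

omit hG in
lemma range_restrict_eq {M N : Type} [AddCommGroup M] [Module R M] [AddCommGroup N]
    [Module R N] (f : M →ₗ[R] N) (p : Submodule R M) (q : Submodule R N)
    (hf : ∀ x ∈ p, f x ∈ q) :
    LinearMap.range (f.restrict hf) = Submodule.comap q.subtype (Submodule.map f p) := by
  ext y
  constructor
  · rintro ⟨x, rfl⟩
    exact ⟨↑x, x.2, rfl⟩
  · rintro ⟨x, hxp, hfx⟩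
    exact ⟨⟨x, hxp⟩, Subtype.ext hfx⟩

omit hG in
lemma ker_mapQ_eq {M N : Type} [AddCommGroup M] [Module R M] [AddCommGroup N]
    [Module R N] (p : Submodule R M) (q : Submodule R N) (f : M →ₗ[R] N)
    (h : p ≤ Submodule.comap f q) :
    LinearMap.ker (Submodule.mapQ p q f h) = Submodule.map p.mkQ (Submodule.comap f q) := by
  ext y
  obtain ⟨x, rfl⟩ := p.mkQ_surjective y
  rw [Submodule.mkQ_apply]
  constructor
  · intro hy
    have : f x ∈ q := by
      rw [LinearMap.mem_ker, Submodule.mapQ_apply, Submodule.Quotient.mk_eq_zero] at hy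
      exact hy
    exact ⟨x, this, rfl⟩
  · rintro ⟨z, hz, hzx⟩
    rw [Submodule.mkQ_apply] at hzx
    have hxz : x - z ∈ p := by
      rw [Submodule.Quotient.eq] at hzx
      have := p.neg_mem hzx
      rwa [neg_sub] at this
    have : f x ∈ q := by
      have h1 : f (x - z) ∈ q := h hxz
      have : f x = f (x - z) + f z := by rw [map_sub]; abel
      rw [this]
      exact q.add_mem h1 hz
    rw [LinearMap.mem_ker, Submodule.mapQ_apply, Submodule.Quotient.mk_eq_zero]
    exact this

omit hG in
lemma range_mapQ_eq {M N : Type} [AddCommGroup M] [Module R M] [AddCommGroup N]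
    [Module R N] (p : Submodule R M) (q : Submodule R N) (f : M →ₗ[R] N)
    (h : p ≤ Submodule.comap f q) :
    LinearMap.range (Submodule.mapQ p q f h) = Submodule.map q.mkQ (LinearMap.range f) := by
  ext y
  constructor
  · rintro ⟨z, rfl⟩
    obtain ⟨x, rfl⟩ := p.mkQ_surjective z
    exact ⟨f x, ⟨x, rfl⟩, by rw [Submodule.mkQ_apply, Submodule.mkQ_apply, Submodule.mapQ_apply]⟩
  · rintro ⟨n, ⟨x, rfl⟩, rfl⟩
    exact ⟨p.mkQ x, by rw [Submodule.mkQ_apply, Submodule.mkQ_apply, Submodule.mapQ_apply]⟩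

include hG hP

lemma memPIso {A B : Type} [AddCommGroup A] [Module R A] [AddCommGroup B] [Module R B]
    (e : A ≃ₗ[R] B) (h : Mem P A) : Mem P B := by
  have hGB : Mem G B := memIso hG e (hP.subset _ h)
  refine hP.ext_closed A B PUnit (e : A →ₗ[R] B) 0 e.injective
    (fun x => ⟨0, Subsingleton.elim _ _⟩) ?_ ?_ h
    (hP.zero_mem _ inferInstance (hG.zero_mem _ inferInstance))
  · rw [LinearEquiv.range, LinearMap.ker_zero]
  · rw [LinearEquiv.range]
    exact strict_top hG hGB

lemma memPRange {X Y : Type} [AddCommGroup X] [Module R X] [AddCommGroup Y] [Module R Y]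
    (f : X →ₗ[R] Y) (hX : Mem P X) (hker : IsStrictSub G (LinearMap.ker f)) :
    Mem P ↥(LinearMap.range f) :=
  memPIso hG hP f.quotKerEquivRange (hP.quot_closed X _ hker hX)

/-- key lemma: a maximal strict `P`-subobject gives the torsion part. -/
lemma exists_tors (M : Type) [AddCommGroup M] [Module R M] [IsNoetherian R M]
    (hM : Mem G M) :
    ∃ T : Submodule R M, IsStrictSub G T ∧ Mem P ↥T ∧ MemRightPerp G P (M ⧸ T) := by
  have hbotP : Mem P ↥(⊥ : Submodule R M) :=
    hP.zero_mem _ inferInstance (strict_bot hG).1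
  obtain ⟨T, ⟨hTs, hTP⟩, hTmax⟩ :=
    (set_has_maximal_iff_noetherian.mpr inferInstance)
      {A : Submodule R M | IsStrictSub G A ∧ Mem P ↥A} ⟨⊥, strict_bot hG, hbotP⟩
  refine ⟨T, hTs, hTP, hG.quot_closed M T hM, ?_⟩
  intro X hX f hf
  by_contra hf0
  have hQmem : Mem G (M ⧸ T) := hG.quot_closed M T hM
  have hIs : IsStrictSub G (LinearMap.range f) := hf.2
  have hIP : Mem P ↥(LinearMap.range f) := memPRange hG hP f hX hf.1
  set T' := Submodule.comap T.mkQ (LinearMap.range f) with hT'def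
  have hT's : IsStrictSub G T' := by
    apply strictComap hG (f := T.mkQ) ?_ ?_ hIs
    · rw [Submodule.ker_mkQ]; exact hTs
    · rw [Submodule.range_mkQ]; exact strict_top hG hQmem |>.1
  have hTle : T ≤ T' := by
    intro x hx
    show T.mkQ x ∈ LinearMap.range f
    have : T.mkQ x = 0 := by
      rw [Submodule.mkQ_apply, Submodule.Quotient.mk_eq_zero]; exact hx
    rw [this]; exact Submodule.zero_mem _
  have hT'P : Mem P ↥T' := by
    refine hP.ext_closed ↥T ↥T' ↥(LinearMap.range f) (Submodule.inclusion hTle)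
      (LinearMap.codRestrict _ (T.mkQ ∘ₗ T'.subtype) (fun c => c.2))
      (Submodule.inclusion_injective hTle) ?_ ?_ ?_ hTP hIP
    · rintro ⟨y, hy⟩
      obtain ⟨x, rfl⟩ := T.mkQ_surjective y
      exact ⟨⟨x, hy⟩, rfl⟩
    · rw [Submodule.range_inclusion]
      refine Eq.trans ?_ (LinearMap.ker_codRestrict _ _ _).symm
      rw [LinearMap.ker_comp, Submodule.ker_mkQ]
    · rw [Submodule.range_inclusion]
      exact strictComapSubtype hG hTs hT's.1
  have hTT' : ¬ T < T' := hTmax T' ⟨hT's, hT'P⟩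
  have : T' ≤ T := by
    rcases lt_or_eq_of_le hTle with h | h
    · exact absurd h hTT'
    · exact h.ge
  apply hf0
  rw [← LinearMap.range_eq_bot]
  have h1 : LinearMap.range f = Submodule.map T.mkQ T' := by
    rw [hT'def, Submodule.map_comap_eq, Submodule.range_mkQ, top_inf_eq]
  rw [h1]
  refine le_bot_iff.mp ?_
  intro y hy
  obtain ⟨x, hx, rfl⟩ := hy
  have hxT : x ∈ T := this hx
  simp only [Submodule.mkQ_apply, Submodule.mem_bot, Submodule.Quotient.mk_eq_zero]
  exact hxT

lemma tors_le {M : Type} [AddCommGroup M] [Module R M] (hM : Mem G M)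
    {T1 T2 : Submodule R M} (h1s : IsStrictSub G T1) (h1P : Mem P ↥T1)
    (h2s : IsStrictSub G T2) (h2Q : MemRightPerp G P (M ⧸ T2)) : T1 ≤ T2 := by
  set g := T2.mkQ ∘ₗ T1.subtype with hgdef
  have hker : IsStrictSub G (LinearMap.ker g) := by
    rw [hgdef, LinearMap.ker_comp, Submodule.ker_mkQ]
    exact strictComapSubtype hG h2s h1s.1
  have hrange : IsStrictSub G (LinearMap.range g) := by
    rw [hgdef, LinearMap.range_comp, Submodule.range_subtype]
    apply strictImage hG (f := T2.mkQ) ?_ ?_ h1s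
    · rw [Submodule.ker_mkQ]; exact h2s.1
    · rw [Submodule.range_mkQ]
      exact strict_top hG h2Q.1
  have h0 : g = 0 := h2Q.2 (ModuleCat.of R ↥T1) h1P g ⟨hker, hrange⟩
  intro x hx
  have : g ⟨x, hx⟩ = 0 := by rw [h0]; rfl
  have : T2.mkQ x = 0 := this
  rwa [Submodule.mkQ_apply, Submodule.Quotient.mk_eq_zero] at this

end Main

theorem statement_9 (k : Type) [Field k] [Algebra k R] [FiniteDimensional k R]
    (G : ModuleCat.{0} R → Prop) (hG : IsTorsionClass G)
    (hfin : ∀ M : ModuleCat.{0} R, G M → Module.Finite R ↥M)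
    (P : ModuleCat.{0} R → Prop) (hP : IsPseudoTorsionClass G P)
    (M : Type) [AddCommGroup M] [Module R M] (hM : Mem G M) :
    (∃! T : Submodule R M, IsStrictSub G T ∧ Mem P ↥T ∧ MemRightPerp G P (M ⧸ T)) ∧
    (∀ (N : Type) [AddCommGroup N] [Module R N], Mem G N →
      ∀ (f : M →ₗ[R] N), IsStrictMorphism G f →
      ∀ (TM : Submodule R M) (TN : Submodule R N),
        (IsStrictSub G TM ∧ Mem P ↥TM ∧ MemRightPerp G P (M ⧸ TM)) →
        (IsStrictSub G TN ∧ Mem P ↥TN ∧ MemRightPerp G P (N ⧸ TN)) →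
        ∃ hle : TM ≤ Submodule.comap f TN,
          IsStrictMorphism G (f.restrict (p := TM) (q := TN) (fun x hx => hle hx)) ∧
          IsStrictMorphism G (Submodule.mapQ TM TN f hle)) := by
  haveI : Module.Finite R M := hfin (ModuleCat.of R M) hM
  haveI hk : IsNoetherian k R := isNoetherian_of_isNoetherianRing_of_finite k R
  haveI : IsNoetherianRing R := isNoetherian_of_tower k hk
  haveI : IsNoetherian R M := isNoetherian_of_isNoetherianRing_of_finite R M
  constructor
  · obtain ⟨T, hT⟩ := exists_tors hG hP M hM
    refine ⟨T, hT, ?_⟩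
    intro T2 hT2
    exact le_antisymm (tors_le hG hP hM hT2.1 hT2.2.1 hT.1 hT.2.2)
      (tors_le hG hP hM hT.1 hT.2.1 hT2.1 hT2.2.2)
  · intro N _ _ hN f hf TM TN hTM hTN
    have hTMG : Mem G ↥TM := hTM.1.1
    have hTNG : Mem G ↥TN := hTN.1.1
    have hQN : Mem G (N ⧸ TN) := hTN.2.2.1
    have hQM : Mem G (M ⧸ TM) := hG.quot_closed M TM hM
    have hcomapS : IsStrictSub G (Submodule.comap f TN) :=
      strictComap hG hf.1 hf.2.1 hTN.1
    -- the composite TM → N/TN is strict, hence zero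
    set g := TN.mkQ ∘ₗ f ∘ₗ TM.subtype with hgdef
    have hgker : IsStrictSub G (LinearMap.ker g) := by
      rw [hgdef, LinearMap.ker_comp, Submodule.ker_mkQ, Submodule.comap_comp]
      exact strictComapSubtype hG hcomapS hTMG
    have hmapTM : IsStrictSub G (Submodule.map f TM) := by
      apply strictImage hG hf.1.1 hf.2 hTM.1
    have hgrange : IsStrictSub G (LinearMap.range g) := by
      rw [hgdef, LinearMap.range_comp, LinearMap.range_comp, Submodule.range_subtype]
      apply strictImage hG (f := TN.mkQ) ?_ ?_ hmapTM
      · rw [Submodule.ker_mkQ]; exact hTNG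
      · rw [Submodule.range_mkQ]; exact strict_top hG hQN
    have h0 : g = 0 := hTN.2.2.2 (ModuleCat.of R ↥TM) hTM.2.1 g ⟨hgker, hgrange⟩
    have hle : TM ≤ Submodule.comap f TN := by
      intro x hx
      have h1 : g ⟨x, hx⟩ = 0 := by rw [h0]; rfl
      have h2 : TN.mkQ (f x) = 0 := h1
      rw [Submodule.mkQ_apply, Submodule.Quotient.mk_eq_zero] at h2
      exact h2
    refine ⟨hle, ⟨?_, ?_⟩, ?_, ?_⟩
    · rw [LinearMap.ker_restrict]
      exact strictComapSubtype hG hf.1 hTMG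
    · rw [range_restrict_eq]
      exact strictComapSubtype hG hmapTM hTNG
    · rw [ker_mapQ_eq]
      apply strictImage hG (f := TM.mkQ) ?_ ?_ hcomapS
      · rw [Submodule.ker_mkQ]; exact hTMG
      · rw [Submodule.range_mkQ]; exact strict_top hG hQM
    · rw [range_mapQ_eq]
      apply strictImage hG (f := TN.mkQ) ?_ ?_ hf.2
      · rw [Submodule.ker_mkQ]; exact hTNG
      · rw [Submodule.range_mkQ]; exact strict_top hG hQN


end PaperTC
end

section
/- Let 𝒢 be a torsion class in mod-Λ and θ_t a smooth green path. If t₀ < t₁, X₀ ∈ 𝒲(θ_{t₀}) and X₁ ∈ 𝒲(θ_{t₁}), then every strict morphism X₀ → X₁ is zero. Moreover there are no nonzero strict morphisms between nonisomorphic objects of 𝒲₀(θ_t) for any t. -/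
/-!
Common framework: a torsion class `𝒢` in `mod-Λ` is modelled as a predicate
`G : ModuleCat R → Prop` (closed under isomorphism, quotients and extensions).
Strict subobjects, fibrations, cofibrations, strict morphisms, pseudo-torsion
classes etc. follow the definitions of the paper.
-/

namespace PaperTC

variable {R : Type} [Ring R]

section Aux

variable {R : Type} [Ring R]

lemma app_congr (θ : StabilityCondition R) {M N : Type} [AddCommGroup M] [Module R M]
    [AddCommGroup N] [Module R N] (e : M ≃ₗ[R] N) : θ.app M = θ.app N :=
  θ.iso_inv (ModuleCat.of R M) (ModuleCat.of R N) e

lemma app_additive (θ : StabilityCondition R) (M : Type) [AddCommGroup M] [Module R M]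
    [h : Module.Finite R M] (A : Submodule R M) :
    θ.app ↥A + θ.app (M ⧸ A) = θ.app M :=
  θ.additive (ModuleCat.of R M) h A

noncomputable def subsingletonEquiv {M N : Type} [AddCommGroup M] [Module R M]
    [AddCommGroup N] [Module R N] [Subsingleton M] [Subsingleton N] : M ≃ₗ[R] N where
  toFun _ := 0
  invFun _ := 0
  map_add' _ _ := by simp
  map_smul' _ _ := by simp
  left_inv _ := Subsingleton.elim _ _
  right_inv _ := Subsingleton.elim _ _

lemma app_subsingleton (θ : StabilityCondition R) (M : Type) [AddCommGroup M] [Module R M]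
    (h : Subsingleton M) : θ.app M = 0 := by
  haveI := h
  haveI : Module.Finite R M := ⟨⟨{0}, by
    rw [eq_top_iff]; intro x _
    have hx : x = (0 : M) := Subsingleton.elim _ _
    rw [hx]; exact Submodule.zero_mem _⟩⟩
  haveI : Subsingleton (M ⧸ (⊥ : Submodule R M)) :=
    Function.Surjective.subsingleton (Submodule.mkQ_surjective _)
  have hadd := app_additive θ M (⊥ : Submodule R M)
  have e1 : θ.app ↥(⊥ : Submodule R M) = θ.app M := app_congr θ subsingletonEquiv
  have e2 : θ.app (M ⧸ (⊥ : Submodule R M)) = θ.app M := app_congr θ subsingletonEquiv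
  linarith

lemma strictSub_map {G : ModuleCat.{0} R → Prop} (hG : IsTorsionClass G)
    {M : Type} [AddCommGroup M] [Module R M]
    {A : Submodule R M} (hA : IsStrictSub G A) {B : Submodule R ↥A} (hB : IsStrictSub G B) :
    IsStrictSub G (B.map A.subtype) := by
  constructor
  · exact hG.iso_closed _ _
      (Submodule.equivMapOfInjective A.subtype (Submodule.injective_subtype A) B).symm.symm hB.1
  · intro C hC
    set D := Submodule.comap A.subtype (A ⊓ C) with hDdef
    have hmapD : D.map A.subtype = A ⊓ C := by
      rw [hDdef, Submodule.map_comap_subtype, ← inf_assoc, inf_idem]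
    have hDG : Mem G ↥D := by
      have hAC : Mem G ↥(A ⊓ C) := hA.2 C hC
      exact hG.iso_closed _ _
        (((Submodule.equivMapOfInjective A.subtype (Submodule.injective_subtype A) D).trans
          (LinearEquiv.ofEq _ _ hmapD)).symm) hAC
    have hBD : Mem G ↥(B ⊓ D) := hB.2 D hDG
    have key : B.map A.subtype ⊓ C = (B ⊓ D).map A.subtype := by
      rw [Submodule.map_inf _ (Submodule.injective_subtype A), hmapD]
      have hle : B.map A.subtype ≤ A := Submodule.map_subtype_le A B
      rw [← inf_assoc, inf_eq_left.mpr hle]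
    rw [key]
    exact hG.iso_closed _ _
      (Submodule.equivMapOfInjective A.subtype (Submodule.injective_subtype A) (B ⊓ D)) hBD

lemma memQbar_of_strictSub {G : ModuleCat.{0} R → Prop} (hG : IsTorsionClass G)
    {θ' : StabilityCondition R} {N : Type} [AddCommGroup N] [Module R N]
    (hQ : memQbar G θ' N) {A : Submodule R N} (hA : IsStrictSub G A) :
    memQbar G θ' ↥A := by
  refine ⟨hA.1, hQ.2.2 A hA, fun B hB => ?_⟩
  have h := hQ.2.2 (B.map A.subtype) (strictSub_map hG hA hB)
  rwa [app_congr θ' (Submodule.equivMapOfInjective A.subtype (Submodule.injective_subtype A) B)]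

lemma memW_of_strictSub {G : ModuleCat.{0} R → Prop} (hG : IsTorsionClass G)
    {θ' : StabilityCondition R} {N : Type} [AddCommGroup N] [Module R N]
    (hW : memW G θ' N) {A : Submodule R N} (hA : IsStrictSub G A)
    (hA0 : θ'.app ↥A = 0) : memW G θ' ↥A := by
  refine ⟨hA.1, hA0, fun B hB => ?_⟩
  have h := hW.2.2 (B.map A.subtype) (strictSub_map hG hA hB)
  rwa [app_congr θ' (Submodule.equivMapOfInjective A.subtype (Submodule.injective_subtype A) B)]

end Aux

section QbarNeg

variable {R : Type} [Ring R]

open Filter Set Topology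

lemma qbar_neg (k : Type) [Field k] [Algebra k R] [FiniteDimensional k R]
    {G : ModuleCat.{0} R → Prop} (hG : IsTorsionClass G)
    (hfin : ∀ M : ModuleCat.{0} R, G M → Module.Finite R ↥M)
    {θ : ℝ → StabilityCondition R} (hθ : IsGreenPath G θ) :
    ∀ (n : ℕ) (N : Type) [AddCommGroup N] [Module R N] [Module k N]
      [IsScalarTower k R N], Module.finrank k N ≤ n →
      ∀ s : ℝ, memQbar G (θ s) N → ¬ Subsingleton N →
      ∀ t : ℝ, t < s → (θ t).app N < 0 := by
  intro n
  induction n with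
  | zero =>
    intro N _ _ _ _ hrank s hQ hns t ht
    haveI : Module.Finite R N := hfin _ hQ.1
    haveI : Module.Finite k N := Module.Finite.trans R N
    have h0 : Module.finrank k N = 0 := Nat.le_zero.mp hrank
    exact absurd (Module.finrank_zero_iff.mp h0) hns
  | succ n IH =>
    intro N _ _ _ _ hrank s hQ hns t ht
    haveI hfinN : Module.Finite R N := hfin _ hQ.1
    haveI : Module.Finite k N := Module.Finite.trans R N
    set g : ℝ → ℝ := fun u => (θ u).val (ModuleCat.of R N) with hgdef
    have hcont : Continuous g := (hθ.smooth (ModuleCat.of R N)).continuous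
    -- induction hypothesis applied to proper strict subobjects
    have hsub : ∀ (A : Submodule R N), IsStrictSub G A → A ≠ ⊤ → ¬ Subsingleton ↥A →
        ∀ u, u < s → (θ u).app ↥A < 0 := by
      intro A hA hAne hAns u hu
      have hlt' : A.restrictScalars k < ⊤ := by
        rw [lt_top_iff_ne_top]
        intro h
        exact hAne ((Submodule.restrictScalars_eq_top_iff k R N).mp h)
      have hlt : Module.finrank k ↥A < Module.finrank k N := Submodule.finrank_lt (lt_top_iff_ne_top.mp hlt')
      exact IH ↥A (by omega) s (memQbar_of_strictSub hG hQ hA) hAns u hu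
    -- semistability at zeros of g before s
    have hsemi : ∀ u, u ≤ s → g u = 0 → memW G (θ u) N := by
      intro u hus hgu
      refine ⟨hQ.1, hgu, ?_⟩
      intro A hA
      by_cases hAt : A = ⊤
      · subst hAt
        rw [app_congr (θ u) (Submodule.topEquiv : ↥(⊤ : Submodule R N) ≃ₗ[R] N)]
        exact le_of_eq hgu
      by_cases hAs : Subsingleton ↥A
      · rw [app_subsingleton (θ u) ↥A hAs]
      rcases eq_or_lt_of_le hus with rfl | hlt
      · exact hQ.2.2 A hA
      · exact le_of_lt (hsub A hA hAt hAs u hlt)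
    have hderiv : ∀ u, u ≤ s → g u = 0 → 0 < deriv g u := by
      intro u hus hgu
      exact hθ.green u (ModuleCat.of R N) hns (hsemi u hus hgu)
    have hdiff : ∀ c : ℝ, HasDerivAt g (deriv g c) c := fun c =>
      (((hθ.smooth (ModuleCat.of R N)).differentiable (by simp)) c).hasDerivAt
    have hslope : ∀ c : ℝ, g c = 0 → 0 < deriv g c →
        ∀ᶠ u in 𝓝[≠] c, 0 < slope g c u := by
      intro c hc hd
      exact (hasDerivAt_iff_tendsto_slope.mp (hdiff c)).eventually (eventually_gt_nhds hd)
    have hright : ∀ c, g c = 0 → 0 < deriv g c → ∀ d, c < d →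
        ∃ u, c < u ∧ u < d ∧ 0 < g u := by
      intro c hc hd d hcd
      have hev : ∀ᶠ u in 𝓝[>] c, 0 < slope g c u :=
        (hslope c hc hd).filter_mono
          (nhdsWithin_mono c (fun x hx => ne_of_gt (hx : c < x)))
      have hmem : Ioo c d ∈ 𝓝[>] c := Ioo_mem_nhdsGT_of_mem ⟨le_rfl, hcd⟩
      obtain ⟨u, hu1, hu2⟩ := (hev.and (eventually_of_mem hmem fun x hx => hx)).exists
      refine ⟨u, hu2.1, hu2.2, ?_⟩
      rw [slope_def_field] at hu1
      have hpos : 0 < u - c := sub_pos.mpr hu2.1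
      rcases div_pos_iff.mp hu1 with ⟨h1, _⟩ | ⟨_, h2⟩
      · linarith
      · linarith
    have hleft : ∀ c, g c = 0 → 0 < deriv g c → ∀ e, e < c →
        ∃ u, e < u ∧ u < c ∧ g u < 0 := by
      intro c hc hd e hec
      have hev : ∀ᶠ u in 𝓝[<] c, 0 < slope g c u :=
        (hslope c hc hd).filter_mono
          (nhdsWithin_mono c (fun x hx => ne_of_lt (hx : x < c)))
      have hmem : Ioo e c ∈ 𝓝[<] c := Ioo_mem_nhdsLT_of_mem ⟨hec, le_rfl⟩
      obtain ⟨u, hu1, hu2⟩ := (hev.and (eventually_of_mem hmem fun x hx => hx)).exists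
      refine ⟨u, hu2.1, hu2.2, ?_⟩
      rw [slope_def_field] at hu1
      have hneg : u - c < 0 := sub_neg.mpr hu2.2
      rcases div_pos_iff.mp hu1 with ⟨_, h2⟩ | ⟨h1, _⟩
      · linarith
      · linarith
    -- main contradiction
    show g t < 0
    by_contra hge
    push_neg at hge
    have hgs : g s ≤ 0 := hQ.2.1
    obtain ⟨s', hts', hs's, hgs'⟩ : ∃ s', t < s' ∧ s' ≤ s ∧ g s' < 0 := by
      rcases lt_or_eq_of_le hgs with h | h
      · exact ⟨s, ht, le_rfl, h⟩
      · obtain ⟨u, hu1, hu2, hu3⟩ := hleft s h (hderiv s le_rfl h) t ht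
        exact ⟨u, hu1, le_of_lt hu2, hu3⟩
    set E := Icc t s' ∩ {u | 0 ≤ g u} with hEdef
    have hEne : E.Nonempty := ⟨t, ⟨le_rfl, le_of_lt hts'⟩, hge⟩
    have hEc : IsClosed E := isClosed_Icc.inter (isClosed_le continuous_const hcont)
    have hEb : BddAbove E := BddAbove.mono Set.inter_subset_left bddAbove_Icc
    set c := sSup E with hcdef
    have hcE : c ∈ E := hEc.csSup_mem hEne hEb
    have hgc0 : 0 ≤ g c := hcE.2
    have hcs' : c < s' := lt_of_le_of_ne hcE.1.2 (fun h => absurd hgc0 (by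
      rw [h]; exact not_le.mpr hgs'))
    have hneg : ∀ u, c < u → u ≤ s' → g u < 0 := by
      intro u h1 h2
      by_contra hle
      push_neg at hle
      have hu : u ∈ E := ⟨⟨le_trans hcE.1.1 (le_of_lt h1), h2⟩, hle⟩
      exact absurd (le_csSup hEb hu) (not_le.mpr h1)
    have hgcle : g c ≤ 0 := by
      have htend : Filter.Tendsto g (𝓝[>] c) (𝓝 (g c)) :=
        (hcont.continuousAt).continuousWithinAt.tendsto
      refine le_of_tendsto htend ?_
      filter_upwards [Ioc_mem_nhdsGT_of_mem (⟨le_rfl, hcs'⟩ : c ∈ Ico c s')] with u hu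
      exact le_of_lt (hneg u hu.1 hu.2)
    have hgc : g c = 0 := le_antisymm hgcle hgc0
    obtain ⟨u, hu1, hu2, hu3⟩ :=
      hright c hgc (hderiv c (le_trans (le_of_lt hcs') hs's) hgc) s' hcs'
    exact absurd hu3 (not_lt.mpr (le_of_lt (hneg u hu1 (le_of_lt hu2))))

end QbarNeg

theorem statement_17 (k : Type) [Field k] [Algebra k R] [FiniteDimensional k R]
    (G : ModuleCat.{0} R → Prop) (hG : IsTorsionClass G)
    (hfin : ∀ M : ModuleCat.{0} R, G M → Module.Finite R ↥M)
    (θ : ℝ → StabilityCondition R) (hθ : IsGreenPath G θ) :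
    (∀ t₀ t₁ : ℝ, t₀ < t₁ → ∀ X₀ X₁ : ModuleCat.{0} R,
      memW G (θ t₀) ↥X₀ → memW G (θ t₁) ↥X₁ →
      ∀ f : ↥X₀ →ₗ[R] ↥X₁, IsStrictMorphism G f → f = 0) ∧
    (∀ (t : ℝ) (X₀ X₁ : ModuleCat.{0} R), memW0 G (θ t) ↥X₀ → memW0 G (θ t) ↥X₁ →
      IsEmpty (↥X₀ ≃ₗ[R] ↥X₁) →
      ∀ f : ↥X₀ →ₗ[R] ↥X₁, IsStrictMorphism G f → f = 0) := by
  constructor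
  · intro t₀ t₁ ht X₀ X₁ hW₀ hW₁ f hf
    by_cases hss : Subsingleton ↥(LinearMap.range f)
    · rw [← LinearMap.range_eq_bot]
      rw [eq_bot_iff]
      intro x hx
      have h0 : (⟨x, hx⟩ : ↥(LinearMap.range f)) = 0 := Subsingleton.elim _ _
      simpa [Submodule.mem_bot] using congrArg Subtype.val h0
    · exfalso
      letI : Module k ↥X₁ := Module.compHom _ (algebraMap k R)
      letI : IsScalarTower k R ↥X₁ :=
        ⟨fun x r m => by rw [Algebra.smul_def, mul_smul]; rfl⟩
      have hQX₁ : memQbar G (θ t₁) ↥X₁ := ⟨hW₁.1, le_of_eq hW₁.2.1, hW₁.2.2⟩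
      have hQI : memQbar G (θ t₁) ↥(LinearMap.range f) :=
        memQbar_of_strictSub hG hQX₁ hf.2
      have hneg : (θ t₀).app ↥(LinearMap.range f) < 0 :=
        qbar_neg k hG hfin hθ (Module.finrank k ↥(LinearMap.range f))
          ↥(LinearMap.range f) le_rfl t₁ hQI hss t₀ ht
      haveI : Module.Finite R ↥X₀ := hfin X₀ hW₀.1
      have hadd := app_additive (θ t₀) ↥X₀ (LinearMap.ker f)
      have hq : (θ t₀).app (↥X₀ ⧸ LinearMap.ker f) = (θ t₀).app ↥(LinearMap.range f) :=
        app_congr _ f.quotKerEquivRange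
      have h1 : (θ t₀).app ↥(LinearMap.ker f) ≤ 0 := hW₀.2.2 _ hf.1
      have h2 : (θ t₀).app ↥X₀ = 0 := hW₀.2.1
      linarith
  · intro t X₀ X₁ hW0₀ hW0₁ hnot f hf
    have hK := hf.1
    have hI := hf.2
    haveI : Module.Finite R ↥X₀ := hfin X₀ hW0₀.1.1
    have hadd := app_additive (θ t) ↥X₀ (LinearMap.ker f)
    have hq : (θ t).app (↥X₀ ⧸ LinearMap.ker f) = (θ t).app ↥(LinearMap.range f) :=
      app_congr _ f.quotKerEquivRange
    have hK0 : (θ t).app ↥(LinearMap.ker f) ≤ 0 := hW0₀.1.2.2 _ hK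
    have hI0 : (θ t).app ↥(LinearMap.range f) ≤ 0 := hW0₁.1.2.2 _ hI
    have hX0 : (θ t).app ↥X₀ = 0 := hW0₀.1.2.1
    have hKz : (θ t).app ↥(LinearMap.ker f) = 0 := by linarith
    have hIz : (θ t).app ↥(LinearMap.range f) = 0 := by linarith
    have hWK : memW G (θ t) ↥(LinearMap.ker f) := memW_of_strictSub hG hW0₀.1 hK hKz
    have hWI : memW G (θ t) ↥(LinearMap.range f) := memW_of_strictSub hG hW0₁.1 hI hIz
    rcases hW0₀.2 _ hK hWK with hKb | hKt
    · rcases hW0₁.2 _ hI hWI with hIb | hIt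
      · exact LinearMap.range_eq_bot.mp hIb
      · have hinj : Function.Injective f := LinearMap.ker_eq_bot.mp hKb
        have hsurj : Function.Surjective f := LinearMap.range_eq_top.mp hIt
        exact (hnot.false (LinearEquiv.ofBijective f ⟨hinj, hsurj⟩)).elim
    · exact LinearMap.ker_eq_top.mp hKt

end PaperTC
end
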